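/- arXiv:math/0509118 — 3 statements merged into one kernel-verified Lean document; each statement's English description precedes it below -/
import Mathlib

section
/- With notation as in the formal annulus setting (degree n morphism f(x) = u^n α, f(y) = v^n α^{−1} with α ∈ C^* over a complete DVR R of equal characteristic p, with p | n), write dy/y = 𝔡·v^m·β·(dv/v) with 𝔡 ∈ R, β ∈ C^*, m ∈ ℕ. Then m is prime to p. -/
/-!
The Euler-type derivation `δ = v ∂/∂v - u ∂/∂u` of `R[[u,v]]` kills `uv - c`, so it descends to
the annulus `C`; it fixes `v`, and through the universal property of `Ω[C/R]` the hypothesis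
becomes `v · δα = 𝔡 · v^(m+1) · βα` in `C`.

Modulo `c^N`, the "weight `k` part" `∑_{i<N} c^i a_{i,i+k}` of a series `∑ a_{ij} u^i v^j` is
well defined on `C` (it vanishes on multiples of `uv - c` by telescoping), is shifted by
multiplication with `v`, and is multiplied by `k` under `δ`. Taking weight `m + 1` parts, the
left side contributes `m · (…) = 0` once `p ∣ m`, whereas the right side contributes `𝔡` times a
unit (the weight `0` part of a unit of `C` is congruent to its constant term modulo `c`). Hence
`𝔡 ∈ (c^N)` for all `N`, and `𝔡 = 0` by Krull's intersection theorem.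
-/

noncomputable section

/-- The formal annulus `R[[u,v]]/(uv - c)` of thickness `c` over `R`. -/
abbrev FormalAnnulus (R : Type*) [CommRing R] (c : R) :=
  MvPowerSeries (Fin 2) R ⧸
    Ideal.span {(MvPowerSeries.X 0 * MvPowerSeries.X 1 : MvPowerSeries (Fin 2) R) -
      MvPowerSeries.C (σ := Fin 2) (R := R) c}

theorem Ideal.eq_zero_of_forall_mem_span_singleton_pow {R : Type*} [CommRing R]
    [IsNoetherianRing R] [IsLocalRing R] {c x : R} (hc : ¬IsUnit c)
    (h : ∀ N, x ∈ Ideal.span {c ^ N}) : x = 0 := by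
  rw [← Ideal.mem_bot, ← Ideal.iInf_pow_eq_bot_of_isLocalRing _ (Ideal.span_singleton_ne_top hc),
    Ideal.mem_iInf]
  simpa [Ideal.span_singleton_pow] using h

namespace MvPowerSeries

variable {R : Type*} [CommRing R]

theorem coeff_X_mul_pderiv {σ : Type*} (s : σ) (e : σ →₀ ℕ) (f : MvPowerSeries σ R) :
    coeff e (X s * pderiv R s f) = e s * coeff e f := by
  rw [X_def, coeff_monomial_mul]
  split_ifs with h
  · rw [one_mul, coeff_pderiv, tsub_add_cancel_of_le h, Finsupp.tsub_apply,
      Finsupp.single_eq_same, Nat.cast_sub (Finsupp.single_le_iff.mp h), Nat.cast_one,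
      sub_add_cancel, mul_comm]
  · rw [Finsupp.single_le_iff, not_le, Nat.lt_one_iff] at h
    rw [h, Nat.cast_zero, zero_mul]

variable (R) in
def weightDeriv : Derivation R (MvPowerSeries (Fin 2) R) (MvPowerSeries (Fin 2) R) :=
  (X 1 : MvPowerSeries (Fin 2) R) • pderiv R 1 - (X 0 : MvPowerSeries (Fin 2) R) • pderiv R 0

theorem coeff_weightDeriv (e : Fin 2 →₀ ℕ) (f : MvPowerSeries (Fin 2) R) :
    coeff e (weightDeriv R f) = ((e 1 : R) - e 0) * coeff e f := by
  simp only [weightDeriv, Derivation.sub_apply, Derivation.smul_apply, smul_eq_mul, map_sub,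
    coeff_X_mul_pderiv, sub_mul]

theorem weightDeriv_X_one : weightDeriv R (X 1) = X 1 := by
  simp [weightDeriv, pderiv_X_self, pderiv_X_of_ne]

theorem weightDeriv_X_zero_mul_X_one_sub_C (c : R) : weightDeriv R (X 0 * X 1 - C c) = 0 := by
  simp [weightDeriv, pderiv_X_self, pderiv_X_of_ne, Derivation.leibniz, mul_comm]

theorem weightDeriv_mem_span (c : R) {x : MvPowerSeries (Fin 2) R}
    (hx : x ∈ Ideal.span {X 0 * X 1 - C c}) :
    weightDeriv R x ∈ Ideal.span {X 0 * X 1 - C c} := by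
  obtain ⟨a, rfl⟩ := Ideal.mem_span_singleton'.mp hx
  rw [Derivation.leibniz, weightDeriv_X_zero_mul_X_one_sub_C, smul_zero, zero_add, smul_eq_mul]
  exact Ideal.mul_mem_right _ _ (Ideal.mem_span_singleton_self _)

def weightIdx (i d : ℕ) : Fin 2 →₀ ℕ := Finsupp.single 0 i + Finsupp.single 1 (i + d)

@[simp] theorem weightIdx_apply_zero (i d : ℕ) : weightIdx i d 0 = i := by simp [weightIdx]

@[simp] theorem weightIdx_apply_one (i d : ℕ) : weightIdx i d 1 = i + d := by simp [weightIdx]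

theorem weightIdx_add (i d k : ℕ) : weightIdx i (d + k) = Finsupp.single 1 k + weightIdx i d := by
  ext j
  fin_cases j <;> simp [add_comm, add_left_comm]

theorem weightIdx_succ (i d : ℕ) :
    weightIdx (i + 1) d = Finsupp.single 0 1 + Finsupp.single 1 1 + weightIdx i d := by
  ext j
  fin_cases j <;> simp [add_comm, add_left_comm, add_assoc]

variable (c : R) in
/-- On `R[[u,v]]/(uv - c)`, where `u^i v^(i+d) = c^i v^d`, this is the coefficient of `v^d`
modulo `c^N`. -/
def weightCoeff (d N : ℕ) : MvPowerSeries (Fin 2) R →ₗ[R] R :=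
  ∑ i ∈ Finset.range N, c ^ i • coeff (weightIdx i d)

theorem weightCoeff_apply (c : R) (d N : ℕ) (f : MvPowerSeries (Fin 2) R) :
    weightCoeff c d N f = ∑ i ∈ Finset.range N, c ^ i * coeff (weightIdx i d) f := by
  simp [weightCoeff, LinearMap.sum_apply]

theorem weightCoeff_X_one_pow_mul (c : R) (d k N : ℕ) (f : MvPowerSeries (Fin 2) R) :
    weightCoeff c (d + k) N (X 1 ^ k * f) = weightCoeff c d N f := by
  simp only [weightCoeff_apply, weightIdx_add, X_pow_eq, coeff_add_monomial_mul, one_mul]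

theorem weightCoeff_weightDeriv (c : R) (d N : ℕ) (f : MvPowerSeries (Fin 2) R) :
    weightCoeff c d N (weightDeriv R f) = d * weightCoeff c d N f := by
  simp only [weightCoeff_apply, coeff_weightDeriv, weightIdx_apply_zero, weightIdx_apply_one,
    Nat.cast_add, add_sub_cancel_left, Finset.mul_sum, mul_left_comm]

theorem mul_X_zero_mul_X_one_sub_C (c : R) (g : MvPowerSeries (Fin 2) R) :
    g * (X 0 * X 1 - C c) =
      monomial (Finsupp.single 0 1 + Finsupp.single 1 1) 1 * g - C c * g := by
  rw [X_def, X_def, monomial_mul_monomial, mul_one]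
  ring

theorem weightCoeff_succ_mul_X_zero_mul_X_one_sub_C (c : R) (d N : ℕ)
    (g : MvPowerSeries (Fin 2) R) :
    weightCoeff c d (N + 1) (g * (X 0 * X 1 - C c)) = -(c ^ (N + 1) * coeff (weightIdx N d) g) := by
  induction N with
  | zero =>
    have h : ¬ Finsupp.single 0 1 + Finsupp.single 1 1 ≤ weightIdx 0 d := fun h ↦ by
      simpa using h 0
    rw [weightCoeff_apply, Finset.sum_range_one, mul_X_zero_mul_X_one_sub_C, map_sub,
      coeff_monomial_mul, if_neg h, coeff_C_mul]
    ring
  | succ N ih =>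
    rw [weightCoeff_apply, Finset.sum_range_succ, ← weightCoeff_apply, ih,
      mul_X_zero_mul_X_one_sub_C, map_sub, weightIdx_succ, coeff_add_monomial_mul, coeff_C_mul,
      ← weightIdx_succ]
    ring

theorem weightCoeff_mem_span_pow (c : R) (d N : ℕ) {f : MvPowerSeries (Fin 2) R}
    (hf : f ∈ Ideal.span {X 0 * X 1 - C c}) : weightCoeff c d N f ∈ Ideal.span {c ^ N} := by
  obtain ⟨g, rfl⟩ := Ideal.mem_span_singleton'.mp hf
  cases N with
  | zero => simp
  | succ N =>
    rw [weightCoeff_succ_mul_X_zero_mul_X_one_sub_C, neg_mem_iff]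
    exact Ideal.mul_mem_right _ _ (Ideal.mem_span_singleton_self _)

theorem mul_weightCoeff_zero_mem_span_pow {c 𝔡 : R} {m : ℕ} (hm : (m : R) = 0)
    {A B : MvPowerSeries (Fin 2) R}
    (h : X 1 * weightDeriv R A - C 𝔡 * X 1 ^ (m + 1) * B ∈ Ideal.span {X 0 * X 1 - C c})
    (N : ℕ) : 𝔡 * weightCoeff c 0 N B ∈ Ideal.span {c ^ N} := by
  have hA : weightCoeff c (m + 1) N (X 1 * weightDeriv R A) = 0 := by
    rw [← pow_one (X 1), weightCoeff_X_one_pow_mul, weightCoeff_weightDeriv, hm, zero_mul]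
  have hB : weightCoeff c (m + 1) N (C 𝔡 * X 1 ^ (m + 1) * B) = 𝔡 * weightCoeff c 0 N B := by
    rw [mul_assoc, ← smul_eq_C_mul, map_smul, smul_eq_mul,
      ← weightCoeff_X_one_pow_mul c 0 (m + 1), zero_add]
  simpa [hA, hB] using weightCoeff_mem_span_pow c (m + 1) N h

theorem isUnit_constantCoeff_of_isUnit_mk [IsLocalRing R] {c : R} (hc : ¬IsUnit c)
    {F : MvPowerSeries (Fin 2) R}
    (hF : IsUnit (Ideal.Quotient.mk (Ideal.span {X 0 * X 1 - C c}) F)) :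
    IsUnit (constantCoeff F) := by
  obtain ⟨G, hG⟩ := hF.exists_right_inv
  obtain ⟨G, rfl⟩ := Ideal.Quotient.mk_surjective G
  rw [← map_mul, ← map_one (Ideal.Quotient.mk _), Ideal.Quotient.eq,
    Ideal.mem_span_singleton'] at hG
  obtain ⟨a, ha⟩ := hG
  have hFG : constantCoeff F * constantCoeff G = 1 - constantCoeff a * c := by
    have h0 := congrArg constantCoeff ha
    simp only [map_mul, map_sub, constantCoeff_X, mul_zero, constantCoeff_C, zero_sub, mul_neg,
      constantCoeff_one] at h0
    linear_combination -h0
  have hunit : IsUnit (1 - constantCoeff a * c) :=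
    IsLocalRing.isUnit_one_sub_self_of_mem_nonunits _ (mul_mem_nonunits_right hc)
  rw [← hFG] at hunit
  exact isUnit_of_mul_isUnit_left hunit

theorem isUnit_weightCoeff_zero_succ [IsLocalRing R] {c : R} (hc : ¬IsUnit c)
    {F : MvPowerSeries (Fin 2) R} (hF : IsUnit (constantCoeff F)) (N : ℕ) :
    IsUnit (weightCoeff c 0 (N + 1) F) := by
  set s := ∑ i ∈ Finset.range N, c ^ i * coeff (weightIdx (i + 1) 0) F
  have h : weightCoeff c 0 (N + 1) F = constantCoeff F + c * s := by
    rw [weightCoeff_apply, Finset.sum_range_succ', Finset.mul_sum, add_comm]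
    simp [weightIdx, pow_succ, mul_assoc, mul_left_comm]
  rw [← add_neg_cancel_right (constantCoeff F) (c * s), ← h] at hF
  refine (IsLocalRing.isUnit_or_isUnit_of_isUnit_add hF).resolve_right fun hu ↦ hc ?_
  exact isUnit_of_mul_isUnit_left (IsUnit.neg_iff _ |>.mp hu)

theorem eq_zero_of_X_one_mul_weightDeriv_sub_mem [IsNoetherianRing R] [IsLocalRing R]
    {c 𝔡 : R} {m : ℕ} (hc : ¬IsUnit c) (hm : (m : R) = 0) {A B : MvPowerSeries (Fin 2) R}
    (hB : IsUnit (constantCoeff B))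
    (h : X 1 * weightDeriv R A - C 𝔡 * X 1 ^ (m + 1) * B ∈ Ideal.span {X 0 * X 1 - C c}) :
    𝔡 = 0 := by
  refine Ideal.eq_zero_of_forall_mem_span_singleton_pow hc fun N ↦ ?_
  have h𝔡 := mul_weightCoeff_zero_mem_span_pow hm h (N + 1)
  rw [Ideal.mul_unit_mem_iff_mem _ (isUnit_weightCoeff_zero_succ hc hB N)] at h𝔡
  exact Ideal.span_singleton_le_span_singleton.mpr (pow_dvd_pow c N.le_succ) h𝔡

end MvPowerSeries

open MvPowerSeries

namespace FormalAnnulus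

variable {R : Type*} [CommRing R] (c : R)

theorem mkₐ_weightDeriv_eq_zero {x : MvPowerSeries (Fin 2) R}
    (hx : Ideal.Quotient.mkₐ R (Ideal.span {X 0 * X 1 - C c}) x = 0) :
    Ideal.Quotient.mkₐ R (Ideal.span {X 0 * X 1 - C c}) (MvPowerSeries.weightDeriv R x) = 0 := by
  rw [Ideal.Quotient.mkₐ_eq_mk, Ideal.Quotient.eq_zero_iff_mem] at hx ⊢
  exact weightDeriv_mem_span c hx

def weightDeriv : Derivation R (FormalAnnulus R c) (FormalAnnulus R c) :=
  (MvPowerSeries.weightDeriv R).liftOfSurjective (Ideal.Quotient.mkₐ_surjective R _)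
    fun _ ↦ mkₐ_weightDeriv_eq_zero c

theorem weightDeriv_mk (f : MvPowerSeries (Fin 2) R) :
    weightDeriv c (Ideal.Quotient.mk _ f) = Ideal.Quotient.mk _ (MvPowerSeries.weightDeriv R f) :=
  Derivation.liftOfSurjective_apply _ (fun _ ↦ mkₐ_weightDeriv_eq_zero c) f

end FormalAnnulus

theorem stmt6_general (p m : ℕ)
    (R : Type*) [CommRing R] [IsDomain R] [IsDiscreteValuationRing R]
    [CharP R p]
    (c : R) (hcu : ¬ IsUnit c)
    (α β : (FormalAnnulus R c)ˣ) (𝔡 : R) (h𝔡 : 𝔡 ≠ 0)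
    (v : FormalAnnulus R c)
    (hv : v = Ideal.Quotient.mk _ (MvPowerSeries.X 1))
    (hδ : v • KaehlerDifferential.D R (FormalAnnulus R c) (↑α : FormalAnnulus R c) =
      (algebraMap R (FormalAnnulus R c) 𝔡 * v ^ m * ↑β * ↑α) •
        KaehlerDifferential.D R (FormalAnnulus R c) v) :
    ¬ p ∣ m := by
  intro hpm
  obtain ⟨A, hA⟩ := Ideal.Quotient.mk_surjective (α : FormalAnnulus R c)
  obtain ⟨B, hB⟩ := Ideal.Quotient.mk_surjective (↑(β * α) : FormalAnnulus R c)
  have hv_fixed : FormalAnnulus.weightDeriv c v = v := by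
    rw [hv, FormalAnnulus.weightDeriv_mk, weightDeriv_X_one]
  have hδα : v * FormalAnnulus.weightDeriv c α = algebraMap R _ 𝔡 * v ^ (m + 1) * ↑(β * α) := by
    have h := congrArg (FormalAnnulus.weightDeriv c).liftKaehlerDifferential hδ
    simp only [map_smul, Derivation.liftKaehlerDifferential_comp_D, hv_fixed, smul_eq_mul] at h
    rw [h, Units.val_mul]
    ring
  have hlift : X 1 * weightDeriv R A - C 𝔡 * X 1 ^ (m + 1) * B ∈
      Ideal.span {X 0 * X 1 - C c} := by
    have hC : Ideal.Quotient.mk (Ideal.span {X 0 * X 1 - C c}) (C 𝔡) =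
        algebraMap R (FormalAnnulus R c) 𝔡 :=
      Ideal.Quotient.mk_algebraMap R _ 𝔡
    rw [← Ideal.Quotient.eq]
    simpa only [map_mul, map_pow, ← FormalAnnulus.weightDeriv_mk, hA, hB, ← hv, hC] using hδα
  have hB_unit : IsUnit (constantCoeff B) :=
    isUnit_constantCoeff_of_isUnit_mk hcu (hB ▸ (β * α).isUnit)
  exact h𝔡 (eq_zero_of_X_one_mul_weightDeriv_sub_mem hcu
    ((CharP.cast_eq_zero_iff R p m).mpr hpm) hB_unit hlift)

/-- Equal-characteristic half of the alternative (A).  In the formal annulus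
setting over a complete DVR `R` of equal characteristic `p`, with `y = v^n·α` (`α ∈ C^*`,
`p ∣ n`), if `dy/y = dα/α = 𝔡·v^m·β·(dv/v)` (equivalently `v·dα = 𝔡·v^m·β·α·dv`) with
`𝔡 ∈ R` nonzero and `β ∈ C^*`, then `m` is prime to `p`. -/
theorem stmt6 (p n m : ℕ) [Fact (Nat.Prime p)] (hpn : p ∣ n) (hn : 0 < n)
    (R : Type*) [CommRing R] [IsDomain R] [IsDiscreteValuationRing R]
    [IsAdicComplete (IsLocalRing.maximalIdeal R) R] [CharP R p]
    (c : R) (hc : c ≠ 0) (hcu : ¬ IsUnit c)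
    (α β : (FormalAnnulus R c)ˣ) (𝔡 : R) (h𝔡 : 𝔡 ≠ 0)
    (v : FormalAnnulus R c)
    (hv : v = Ideal.Quotient.mk _ (MvPowerSeries.X 1))
    (y : FormalAnnulus R c) (hy : y = v ^ n * α)
    (hδ : v • KaehlerDifferential.D R (FormalAnnulus R c) (↑α : FormalAnnulus R c) =
      (algebraMap R (FormalAnnulus R c) 𝔡 * v ^ m * ↑β * ↑α) •
        KaehlerDifferential.D R (FormalAnnulus R c) v) :
    ¬ p ∣ m :=
  stmt6_general p m R c hcu α β 𝔡 h𝔡 v hv hδ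
end
end

section
/- Let r ∈ ℚ ∩ [0,1], A a complete local noetherian ℤ_p[p^r]-algebra with residue field of characteristic p, and W(A) a complete local noetherian ℤ_p[p^r]-algebra with a surjection W(A) → A in which p^r is a regular element. Let f : A[[x]] → A[[u]] be an A-algebra map with f(x) = Σ a_i u^i, and δ a B-module homomorphism Ω̂_{A[[x]]/A} → Ω̂_{A[[u]]/A} with δ(dx) = (Σ b_{j+1} u^j) du. Then δ is p^r-earnest (i.e. a_i = p^r·b_i/i for i ≢ 0 mod p and b_i = (i/p^r)·a_i for i ≡ 0 mod p) if and only if there exists a lifting f̃ : W(A)[[x]] → W(A)[[u]] of f with p^r | df̃ and δ equal to the reduction of df̃/p^r. -/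
/-!
Both conditions are coefficientwise. To lift, take arbitrary preimages of `bᵢ` (for `p ∤ i`) or
`aᵢ` (for `p ∣ i`) and define the other coefficient by `awᵢ = i⁻¹ π bwᵢ`, resp. `bwᵢ = eᵢ awᵢ`;
here `i` is a unit in `W` because it is one in the local ring `A` (its residue is nonzero) and
`W → A` is a surjection of local rings. Conversely, reducing `π bwᵢ = i awᵢ` gives the condition
for `p ∤ i`, while for `p ∣ i` one cancels the regular element `π` from `π bwᵢ = π eᵢ awᵢ`
before reducing.
-/

open IsLocalRing

theorem isUnit_natCast_of_not_dvd {R : Type*} [CommRing R] [IsLocalRing R] (p : ℕ)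
    [CharP (ResidueField R) p] {n : ℕ} (hn : ¬ p ∣ n) : IsUnit (n : R) :=
  (residue_ne_zero_iff_isUnit _).mp <| by
    rw [map_natCast]
    exact (CharP.cast_eq_zero_iff _ p n).not.mpr hn

section Lift

variable {W A : Type*} [CommRing W] [CommRing A] (φ : W →+* A)

theorem exists_lift_of_isUnit_natCast (hφ : Function.Surjective φ) (ϖ : W) {n : ℕ}
    (hn : IsUnit (n : W)) {a b : A} (h : (n : A) * a = φ ϖ * b) :
    ∃ aw bw, φ aw = a ∧ φ bw = b ∧ ϖ * bw = n * aw := by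
  obtain ⟨bw, rfl⟩ := hφ b
  refine ⟨↑hn.unit⁻¹ * (ϖ * bw), bw, ?_, rfl, ?_⟩
  · calc φ (↑hn.unit⁻¹ * (ϖ * bw)) = φ ↑hn.unit⁻¹ * ((n : A) * a) := by
          rw [h, map_mul, map_mul]
      _ = φ (↑hn.unit⁻¹ * n) * a := by rw [map_mul, map_natCast, mul_assoc]
      _ = a := by rw [hn.val_inv_mul, map_one, one_mul]
  · exact (hn.unit.mul_inv_cancel_left _).symm

theorem exists_lift_of_mul_eq_natCast (hφ : Function.Surjective φ) {ϖ ε : W} {n : ℕ}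
    (hε : ϖ * ε = n) {a b : A} (h : b = φ ε * a) :
    ∃ aw bw, φ aw = a ∧ φ bw = b ∧ ϖ * bw = n * aw := by
  obtain ⟨aw, rfl⟩ := hφ a
  exact ⟨aw, ε * aw, rfl, by rw [h, map_mul], by rw [← mul_assoc, hε]⟩

end Lift

theorem eq_mul_of_mul_eq_natCast_mul {W : Type*} [CommRing W] {ϖ ε x y : W} {n : ℕ}
    (hϖ : ϖ ∈ nonZeroDivisors W) (hε : ϖ * ε = n) (h : ϖ * y = n * x) : y = ε * x :=
  (mul_cancel_left_mem_nonZeroDivisors hϖ).mp <| by rw [h, ← mul_assoc, hε]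

theorem stmt10_general (p : ℕ)
    (O : Type*) [CommRing O] (π : O)
    (e : ℕ → O) (he : ∀ i : ℕ, p ∣ i → π * e i = (i : O))
    (A W : Type*) [CommRing A] [CommRing W]
    [IsLocalRing A]
    [IsLocalRing W]
    (hres : CharP (IsLocalRing.ResidueField A) p)
    [Algebra O A] [Algebra O W]
    (φ : W →+* A) (hφ : Function.Surjective φ)
    (hcomp : φ.comp (algebraMap O W) = algebraMap O A)
    (hreg : algebraMap O W π ∈ nonZeroDivisors W)
    (a b : ℕ → A) :
    ((∀ i : ℕ, ¬ p ∣ i → (i : A) * a i = algebraMap O A π * b i) ∧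
     (∀ i : ℕ, p ∣ i → b i = algebraMap O A (e i) * a i)) ↔
    (∃ aw bw : ℕ → W,
      (∀ i, φ (aw i) = a i) ∧ (∀ i, φ (bw i) = b i) ∧
      (∀ i : ℕ, algebraMap O W π * bw i = (i : W) * aw i)) := by
  have hφO (x : O) : φ (algebraMap O W x) = algebraMap O A x := RingHom.congr_fun hcomp x
  have hε (i : ℕ) (hi : p ∣ i) : algebraMap O W π * algebraMap O W (e i) = i := by
    rw [← map_mul, he i hi, map_natCast]
  have := IsLocalHom.of_surjective φ hφ
  constructor
  · rintro ⟨hcoprime, hdvd⟩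
    have hlift (i : ℕ) : ∃ aw bw, φ aw = a i ∧ φ bw = b i ∧ algebraMap O W π * bw = i * aw := by
      by_cases hi : p ∣ i
      · exact exists_lift_of_mul_eq_natCast φ hφ (hε i hi) (by rw [hφO]; exact hdvd i hi)
      · have hiW : IsUnit (i : W) := isUnit_of_map_unit φ _ <| by
          rw [map_natCast]; exact isUnit_natCast_of_not_dvd p hi
        exact exists_lift_of_isUnit_natCast φ hφ _ hiW (by rw [hφO]; exact hcoprime i hi)
    choose aw bw h using hlift
    exact ⟨aw, bw, fun i => (h i).1, fun i => (h i).2.1, fun i => (h i).2.2⟩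
  · rintro ⟨aw, bw, haw, hbw, hkey⟩
    refine ⟨fun i _ => ?_, fun i hi => ?_⟩
    · rw [← haw, ← hbw, ← hφO, ← map_natCast φ, ← map_mul, ← map_mul, hkey]
    · rw [← haw, ← hbw, ← hφO, ← map_mul, eq_mul_of_mul_eq_natCast_mul hreg (hε i hi) (hkey i)]

/-- Characterisation of `p^r`-earnest homomorphisms via liftings.
Work over a base ring `O` (playing the role of `ℤ_p[p^r]`) with distinguished element
`π = p^r` and elements `e i = i/p^r` for `p ∣ i`.  Let `A` be a complete local noetherian
`O`-algebra with residue characteristic `p` and `W` ("`W(A)`") a complete local noetherian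
`O`-algebra with a surjection `φ : W → A` in which `π` is regular.  A morphism
`f : A[[x]] → A[[u]]` with `f(x) = Σ aᵢ uⁱ` and a homomorphism `δ` with
`δ(dx) = (Σ bᵢ u^{i−1}) du` satisfy the `p^r`-earnestness conditions
(`aᵢ = p^r bᵢ/i` for `i ≢ 0 [p]` and `bᵢ = (i/p^r)·aᵢ` for `i ≡ 0 [p]`)
iff there is a lifting `f̃` over `W`, with coefficients `awᵢ`, such that `p^r ∣ df̃`
(witnessed by `bwᵢ` with `π·bwᵢ = i·awᵢ`) and `δ` is the reduction of `df̃/p^r`. -/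
theorem stmt10 (p : ℕ) [Fact (Nat.Prime p)]
    (O : Type*) [CommRing O] (π : O)
    (e : ℕ → O) (he : ∀ i : ℕ, p ∣ i → π * e i = (i : O))
    (A W : Type*) [CommRing A] [CommRing W]
    [IsLocalRing A] [IsNoetherianRing A] [IsAdicComplete (IsLocalRing.maximalIdeal A) A]
    [IsLocalRing W] [IsNoetherianRing W] [IsAdicComplete (IsLocalRing.maximalIdeal W) W]
    (hres : CharP (IsLocalRing.ResidueField A) p)
    [Algebra O A] [Algebra O W]
    (φ : W →+* A) (hφ : Function.Surjective φ)
    (hcomp : φ.comp (algebraMap O W) = algebraMap O A)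
    (hreg : algebraMap O W π ∈ nonZeroDivisors W)
    (a b : ℕ → A) :
    ((∀ i : ℕ, ¬ p ∣ i → (i : A) * a i = algebraMap O A π * b i) ∧
     (∀ i : ℕ, p ∣ i → b i = algebraMap O A (e i) * a i)) ↔
    (∃ aw bw : ℕ → W,
      (∀ i, φ (aw i) = a i) ∧ (∀ i, φ (bw i) = b i) ∧
      (∀ i : ℕ, algebraMap O W π * bw i = (i : W) * aw i)) :=
  stmt10_general p O π e he A W hres φ hφ hcomp hreg a b
end

section
/- Let A → A' be a faithfully flat morphism of ℤ_p[p^r]-algebras, f : A[[x]] → A[[u]] an A-morphism, and let Ξ^r_A denote the set of p^r-earnest homomorphisms Ω̂_{A[[x]]/A} → Ω̂_{A[[u]]/A}. Then the sequence 0 → Ξ^r_A → Ξ^r_{A'} ⇉ Ξ^r_{A'⊗_A A'} is exact: a homomorphism over A is p^r-earnest if and only if its base change to A' is, and Ξ^r_A is the equalizer of the two base-change maps. -/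
/-!
Both descent statements are the exactness of `A → A' ⇉ A' ⊗[A] A'` for a faithfully flat
`A → A'`: injectivity of `A → A'` reflects the defining equations of earnestness, and the
equalizer property descends every coefficient of an earnest homomorphism over `A'` whose two
base changes agree, after which earnestness of the descended coefficients is again reflected.
-/

open TensorProduct

noncomputable section

theorem Module.FaithfullyFlat.exists_algebraMap_eq_of_includeLeft_eq_includeRight
    {A A' : Type*} [CommRing A] [CommRing A'] [Algebra A A'] [Module.FaithfullyFlat A A']
    {x : A'} (hx : (Algebra.TensorProduct.includeLeft : A' →ₐ[A] A' ⊗[A] A') x =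
      (Algebra.TensorProduct.includeRight : A' →ₐ[A] A' ⊗[A] A') x) :
    ∃ a : A, algebraMap A A' a = x :=
  (Algebra.IsEffective.of_faithfullyFlat A A' x).mp <| by simpa [sub_eq_zero] using hx

/-- `b` are the coefficients of a `π`-earnest homomorphism relative to the coefficients `a` of
`f`, where `π = p^r` and `e i = i / p^r`. -/
def IsEarnest {R : Type*} [Semiring R] (p : ℕ) (π : R) (e a b : ℕ → R) : Prop :=
  (∀ i, ¬ p ∣ i → (i : R) * a i = π * b i) ∧ (∀ i, p ∣ i → b i = e i * a i)

theorem isEarnest_map_iff {R S : Type*} [Semiring R] [Semiring S] (f : R →+* S)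
    (hf : Function.Injective f) (p : ℕ) (π : R) (e a b : ℕ → R) :
    IsEarnest p (f π) (f ∘ e) (f ∘ a) (f ∘ b) ↔ IsEarnest p π e a b := by
  simp only [IsEarnest, Function.comp_apply, ← map_natCast f, ← map_mul, hf.eq_iff]

theorem stmt11_general (p : ℕ)
    (A A' : Type*) [CommRing A] [CommRing A'] [Algebra A A']
    [Module.FaithfullyFlat A A']
    (π : A) (e : ℕ → A)
    (a : ℕ → A) :
    -- earnestness is detected after faithfully flat base change
    (∀ b : ℕ → A,
      ((∀ i, ¬ p ∣ i → (i : A) * a i = π * b i) ∧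
        (∀ i, p ∣ i → b i = e i * a i)) ↔
      ((∀ i, ¬ p ∣ i → (i : A') * algebraMap A A' (a i) =
          algebraMap A A' π * algebraMap A A' (b i)) ∧
        (∀ i, p ∣ i → algebraMap A A' (b i) =
          algebraMap A A' (e i) * algebraMap A A' (a i)))) ∧
    -- left exactness: Ξ^r_A → Ξ^r_{A'} is injective
    (∀ b₁ b₂ : ℕ → A, (∀ i, algebraMap A A' (b₁ i) = algebraMap A A' (b₂ i)) → b₁ = b₂) ∧
    -- Ξ^r_A is the equalizer of the two maps Ξ^r_{A'} ⇉ Ξ^r_{A'⊗A'}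
    (∀ b' : ℕ → A',
      ((∀ i, ¬ p ∣ i → (i : A') * algebraMap A A' (a i) = algebraMap A A' π * b' i) ∧
        (∀ i, p ∣ i → b' i = algebraMap A A' (e i) * algebraMap A A' (a i))) →
      (∀ i, (Algebra.TensorProduct.includeLeft : A' →ₐ[A] A' ⊗[A] A') (b' i) =
        (Algebra.TensorProduct.includeRight : A' →ₐ[A] A' ⊗[A] A') (b' i)) →
      ∃ b : ℕ → A, (∀ i, algebraMap A A' (b i) = b' i) ∧
        (∀ i, ¬ p ∣ i → (i : A) * a i = π * b i) ∧
        (∀ i, p ∣ i → b i = e i * a i)) := by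
  have hinj := FaithfulSMul.algebraMap_injective A A'
  have hiff (b : ℕ → A) := isEarnest_map_iff (algebraMap A A') hinj p π e a b
  refine ⟨fun b => (hiff b).symm, fun b₁ b₂ h => funext fun i => hinj (h i), ?_⟩
  intro b' hearnest heq
  choose b hb using fun i =>
    Module.FaithfullyFlat.exists_algebraMap_eq_of_includeLeft_eq_includeRight (heq i)
  obtain rfl : (algebraMap A A' ∘ b) = b' := funext hb
  exact ⟨b, hb, (hiff b).mp hearnest⟩

/-- Faithfully flat descent for `p^r`-earnest homomorphisms.  Fix `π = p^r`
and `e i = i/p^r` in `A`, and the coefficients `a i` of `f`.  Earnestness of `δ` (with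
coefficients `b i`) descends and the set `Ξ^r` of earnest homomorphisms is the equalizer
of the two base-change maps to `A' ⊗_A A'`: the sequence
`0 → Ξ^r_A → Ξ^r_{A'} ⇉ Ξ^r_{A'⊗A'}` is exact. -/
theorem stmt11 (p : ℕ) [Fact (Nat.Prime p)]
    (A A' : Type*) [CommRing A] [CommRing A'] [Algebra A A']
    [Module.FaithfullyFlat A A']
    (π : A) (e : ℕ → A) (he : ∀ i : ℕ, p ∣ i → π * e i = (i : A))
    (a : ℕ → A) :
    -- earnestness is detected after faithfully flat base change
    (∀ b : ℕ → A,
      ((∀ i, ¬ p ∣ i → (i : A) * a i = π * b i) ∧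
        (∀ i, p ∣ i → b i = e i * a i)) ↔
      ((∀ i, ¬ p ∣ i → (i : A') * algebraMap A A' (a i) =
          algebraMap A A' π * algebraMap A A' (b i)) ∧
        (∀ i, p ∣ i → algebraMap A A' (b i) =
          algebraMap A A' (e i) * algebraMap A A' (a i)))) ∧
    -- left exactness: Ξ^r_A → Ξ^r_{A'} is injective
    (∀ b₁ b₂ : ℕ → A, (∀ i, algebraMap A A' (b₁ i) = algebraMap A A' (b₂ i)) → b₁ = b₂) ∧
    -- Ξ^r_A is the equalizer of the two maps Ξ^r_{A'} ⇉ Ξ^r_{A'⊗A'}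
    (∀ b' : ℕ → A',
      ((∀ i, ¬ p ∣ i → (i : A') * algebraMap A A' (a i) = algebraMap A A' π * b' i) ∧
        (∀ i, p ∣ i → b' i = algebraMap A A' (e i) * algebraMap A A' (a i))) →
      (∀ i, (Algebra.TensorProduct.includeLeft : A' →ₐ[A] A' ⊗[A] A') (b' i) =
        (Algebra.TensorProduct.includeRight : A' →ₐ[A] A' ⊗[A] A') (b' i)) →
      ∃ b : ℕ → A, (∀ i, algebraMap A A' (b i) = b' i) ∧
        (∀ i, ¬ p ∣ i → (i : A) * a i = π * b i) ∧
        (∀ i, p ∣ i → b i = e i * a i)) :=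
  stmt11_general p A A' π e a
end
end
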